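/- arXiv:math/0609172 — 3 statements merged into one kernel-verified Lean document; each statement's English description precedes it below -/
import Mathlib

section
/- Let B = ⊕_{p∈ℤ} B_p be a ℤ-graded ring and X ∈ B_1 a central homogeneous element of degree 1 that is not a zero divisor. Then the two-sided ideal ⟨1 − X⟩ generated by 1 − X does not contain any nonzero homogeneous element of B. -/
/-!
Write `b = (1 - X) * c`, which is possible because `1 - X` is central, and compare homogeneous
components: `b_q = c_q - X * c_(q-1)`, so `c_q = X * c_(q-1)` for every `q ≠ p`. Below `p` this
recursion carries the vanishing of `c` near `-∞` up to `c_(p-1) = 0`; above `p`, since `X` is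
not a zero divisor, it carries the vanishing near `+∞` down to `c_p = 0`. Hence
`b = b_p = c_p - X * c_(p-1) = 0`.
-/

open DirectSum Polynomial
open scoped Classical

variable {R : Type*} [Ring R]

/-- The top degree of `f` (junk value `0` for `f = 0`). -/
noncomputable def deg (A : ℤ → AddSubgroup R) [GradedRing A] (f : R) : ℤ :=
  WithBot.unbotD 0 ((DirectSum.decompose A f).support.max)

/-- The leading homogeneous part `LH f` of `f`. -/
noncomputable def LH (A : ℤ → AddSubgroup R) [GradedRing A] (f : R) : R :=
  (DirectSum.decompose A f (deg A f) : R)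

/-- The homogenization `f*` of `f` with respect to the central degree-one variable `t = X`. -/
noncomputable def homog (A : ℤ → AddSubgroup R) [GradedRing A] (f : R) : Polynomial R :=
  ∑ i ∈ (DirectSum.decompose A f).support,
    Polynomial.C (DirectSum.decompose A f i : R) * Polynomial.X ^ (deg A f - i).toNat

/-- Dehomogenization `F ↦ F_*`, i.e. evaluation of `t = X` at `1`. -/
noncomputable def dehom : Polynomial R →+* R :=
  Polynomial.eval₂RingHom' (RingHom.id R) 1 (fun a => Commute.one_right a)

/-- The degree-`p` component of the mixed gradation on `R[t]`, spanned by the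
elements `a * t^j` with `a ∈ A i` and `i + j = p`. -/
noncomputable def mixed (A : ℤ → AddSubgroup R) (p : ℤ) : AddSubgroup (Polynomial R) :=
  AddSubgroup.closure
    { F | ∃ (i : ℤ) (j : ℕ) (a : R), a ∈ A i ∧ i + (j : ℤ) = p ∧
        F = Polynomial.C a * Polynomial.X ^ j }

open Filter

theorem TwoSidedIdeal.exists_mul_eq_of_mem_span_singleton {a x : R}
    (ha : ∀ r, Commute a r) (hx : x ∈ TwoSidedIdeal.span {a}) : ∃ c, a * c = x := by
  let I : TwoSidedIdeal R := .mk' (AddMonoidHom.mulLeft a).range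
    (AddSubgroup.zero_mem _) (AddSubgroup.add_mem _) (AddSubgroup.neg_mem _)
    (by rintro r - ⟨c, rfl⟩; exact ⟨r * c, (ha r).left_comm c⟩)
    (by rintro - r ⟨c, rfl⟩; exact ⟨c * r, (mul_assoc a c r).symm⟩)
  have haI : a ∈ I := (TwoSidedIdeal.mem_mk' _ _ _ _ _ _ _).mpr ⟨1, mul_one a⟩
  have hxI : x ∈ I := TwoSidedIdeal.mem_span_iff.mp hx I (Set.singleton_subset_iff.mpr haI)
  obtain ⟨c, hc⟩ := (TwoSidedIdeal.mem_mk' _ _ _ _ _ _ _).mp hxI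
  exact ⟨c, hc⟩

theorem DirectSum.coe_decompose_mul_of_left_mem_sub {ι A σ : Type*} [AddCommGroup ι]
    [DecidableEq ι] [Ring A] [SetLike σ A] [AddSubgroupClass σ A] (𝒜 : ι → σ) [GradedRing 𝒜]
    {i : ι} {a : A} (ha : a ∈ 𝒜 i) (b : A) (q : ι) :
    (decompose 𝒜 (a * b) q : A) = a * decompose 𝒜 b (q - i) := by
  have := coe_decompose_mul_add_of_left_mem 𝒜 (b := b) (j := q - i) ha
  rwa [add_sub_cancel] at this

section ShiftRecurrence

variable {M : Type*} [MulZeroClass M] {f : ℤ → M} {x : M}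

theorem eq_zero_of_eq_mul_pred_of_eventually_atBot {r : ℤ} (hrec : ∀ q ≤ r, f q = x * f (q - 1))
    (hbot : ∀ᶠ q in atBot, f q = 0) : f r = 0 := by
  obtain ⟨m, hm⟩ := Filter.eventually_atBot.mp hbot
  suffices ∀ q, min m r ≤ q → q ≤ r → f q = 0 from this r (min_le_right _ _) le_rfl
  intro q hq
  induction q, hq using Int.leInduction with
  | base => exact fun _ => hm _ (min_le_left _ _)
  | succ q _ ih => intro hq; rw [hrec _ hq, add_sub_cancel_right, ih (by omega), mul_zero]

theorem eq_zero_of_eq_mul_pred_of_eventually_atTop {p : ℤ} (hx : ∀ b, x * b = 0 → b = 0)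
    (hrec : ∀ q > p, f q = x * f (q - 1)) (htop : ∀ᶠ q in atTop, f q = 0) : f p = 0 := by
  obtain ⟨M, hM⟩ := Filter.eventually_atTop.mp htop
  suffices ∀ q, q ≤ max M p → p ≤ q → f q = 0 from this p (le_max_right _ _) le_rfl
  intro q hq
  induction q, hq using Int.leInductionDown with
  | base => exact fun _ => hM _ (le_max_left _ _)
  | pred q _ ih => intro hq; exact hx _ (by rw [← hrec q (by omega), ih (by omega)])

end ShiftRecurrence

theorem stmt0_general {B : Type*} [Ring B] (B' : ℤ → AddSubgroup B) [GradedRing B']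
    (X : B) (hX1 : X ∈ B' 1) (hXcentral : ∀ b : B, Commute X b)
    (hXregl : ∀ b : B, X * b = 0 → b = 0) :
    ∀ (p : ℤ) (b : B), b ∈ B' p → b ∈ TwoSidedIdeal.span {1 - X} → b = 0 := by
  intro p b hb hspan
  obtain ⟨c, rfl⟩ := TwoSidedIdeal.exists_mul_eq_of_mem_span_singleton
    (fun r => (Commute.one_left r).sub_left (hXcentral r)) hspan
  set f : ℤ → B := fun q => decompose B' c q
  have hcomp : ∀ q, (decompose B' ((1 - X) * c) q : B) = f q - X * f (q - 1) := fun q => by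
    rw [sub_mul, one_mul, decompose_sub, DirectSum.sub_apply, AddSubgroupClass.coe_sub,
      coe_decompose_mul_of_left_mem_sub B' hX1]
  have hrec : ∀ q ≠ p, f q = X * f (q - 1) := fun q hq =>
    sub_eq_zero.mp <| (hcomp q).symm.trans (decompose_of_mem_ne B' hb hq.symm)
  have hfin : ∀ᶠ q in atBot ⊔ atTop, f q = 0 := by
    rw [← Int.cofinite_eq]
    filter_upwards [(decompose B' c).support.eventually_cofinite_notMem] with q hq
    simp [f, DFinsupp.notMem_support_iff.mp hq]
  obtain ⟨hbot, htop⟩ := Filter.eventually_sup.mp hfin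
  rw [← decompose_of_mem_same B' hb, hcomp,
    eq_zero_of_eq_mul_pred_of_eventually_atTop hXregl (fun q hq => hrec q hq.ne') htop,
    eq_zero_of_eq_mul_pred_of_eventually_atBot (fun q hq => hrec q (by omega)) hbot,
    mul_zero, sub_zero]

/-- In a ℤ-graded ring `B`, if `X` is a central homogeneous element of
degree `1` which is not a zero divisor, then the two-sided ideal generated by `1 - X`
contains no nonzero homogeneous element. -/
theorem stmt0 {B : Type*} [Ring B] (B' : ℤ → AddSubgroup B) [GradedRing B']
    (X : B) (hX1 : X ∈ B' 1) (hXcentral : ∀ b : B, Commute X b)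
    (hXregl : ∀ b : B, X * b = 0 → b = 0) (hXregr : ∀ b : B, b * X = 0 → b = 0) :
    ∀ (p : ℤ) (b : B), b ∈ B' p → b ∈ TwoSidedIdeal.span {1 - X} → b = 0 :=
  stmt0_general B' X hX1 hXcentral hXregl
end

section
/- If I is a two-sided ideal of a ℤ-graded ring R and ⟨I*⟩ is the graded two-sided ideal of R[t] generated by the homogenizations f* of all f ∈ I, then every homogeneous element F ∈ ⟨I*⟩ is of the form F = t^r f* for some r ∈ ℕ and some f ∈ I. -/
open DirectSum Polynomial
open scoped Classical

variable {R : Type*} [Ring R]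

/-!
Dehomogenization `F ↦ F(1)` is a ring map with `(f*)(1) = f`, so it sends `⟨I*⟩` into `I`.
If `F` is homogeneous of degree `p`, the coefficient of `t^n` in `F` lies in `R_{p-n}`, so these
coefficients are exactly the homogeneous components of `f = F(1)`; comparing with the definition
of `f*` gives `F = t^r f*`, where `r` is the order of `F` in `t`.
-/

lemma dehom_apply (F : R[X]) : dehom F = ∑ n ∈ F.support, F.coeff n := by
  show eval₂ (RingHom.id R) 1 F = _
  simp [eval₂_eq_sum, Polynomial.sum]

lemma coeff_mem_of_mem_mixed (A : ℤ → AddSubgroup R) {F : R[X]} {p : ℤ}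
    (hF : F ∈ mixed A p) (n : ℕ) : F.coeff n ∈ A (p - n) := by
  induction hF using AddSubgroup.closure_induction with
  | mem x hx =>
    obtain ⟨i, j, a, ha, rfl, rfl⟩ := hx
    rw [coeff_C_mul, coeff_X_pow]
    split_ifs with h
    · subst h
      simpa using ha
    · simp [(A _).zero_mem]
  | zero => simp [(A _).zero_mem]
  | add x y _ _ hx hy => simpa using (A _).add_mem hx hy
  | neg x _ hx => simpa using (A _).neg_mem hx

section Graded

variable (A : ℤ → AddSubgroup R) [GradedRing A]

lemma dehom_homog (g : R) : dehom (homog A g) = g := by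
  have hterm (i : ℤ) (n : ℕ) : dehom (C (decompose A g i : R) * X ^ n) = (decompose A g i : R) := by
    show eval₂ _ 1 _ = _
    simp
  simp only [homog, map_sum, hterm]
  exact sum_support_decompose A g

lemma dehom_mem_of_mem_span_homog {I : TwoSidedIdeal R} {F : R[X]}
    (hF : F ∈ TwoSidedIdeal.span (homog A '' (I : Set R))) : dehom F ∈ I := by
  have hsub : homog A '' (I : Set R) ⊆ (TwoSidedIdeal.comap dehom I : Set R[X]) := by
    rintro _ ⟨g, hg, rfl⟩
    simpa [TwoSidedIdeal.mem_comap, dehom_homog] using hg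
  exact (TwoSidedIdeal.mem_comap _).mp (TwoSidedIdeal.mem_span_iff.mp hF _ hsub)

section Homogeneous

variable {A} {F : R[X]} {p : ℤ} (hF : F ∈ mixed A p)
include hF

lemma coe_decompose_dehom_of_mem_mixed (i : ℤ) :
    (decompose A (dehom F) i : R) = ∑ n ∈ F.support, if p - n = i then F.coeff n else 0 := by
  rw [dehom_apply, decompose_sum, DFinsupp.finsetSum_apply, AddSubmonoidClass.coe_finsetSum]
  refine Finset.sum_congr rfl fun n _ => ?_
  split_ifs with h
  · rw [← h, decompose_of_mem_same A (coeff_mem_of_mem_mixed A hF n)]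
  · rw [decompose_of_mem_ne A (coeff_mem_of_mem_mixed A hF n) h]

lemma coe_decompose_dehom_sub_of_mem_mixed (n : ℕ) :
    (decompose A (dehom F) (p - n) : R) = F.coeff n := by
  simp only [coe_decompose_dehom_of_mem_mixed hF, sub_right_inj, Nat.cast_inj, Finset.sum_ite_eq']
  split_ifs with h
  · rfl
  · exact (notMem_support_iff.mp h).symm

lemma coe_decompose_dehom_of_lt (i : ℤ) (hi : p < i) : (decompose A (dehom F) i : R) = 0 := by
  rw [coe_decompose_dehom_of_mem_mixed hF]
  exact Finset.sum_eq_zero fun n _ => if_neg (by omega)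

lemma support_decompose_dehom_of_mem_mixed :
    (decompose A (dehom F)).support = F.support.image (fun n : ℕ => p - n) := by
  ext i
  simp only [DFinsupp.mem_support_iff, Finset.mem_image, mem_support_iff, ne_eq]
  constructor
  · intro hi
    have hip : i ≤ p := by
      by_contra! hpi
      exact hi (ZeroMemClass.coe_eq_zero.mp (coe_decompose_dehom_of_lt hF i hpi))
    obtain ⟨n, rfl⟩ : ∃ n : ℕ, i = p - n := ⟨(p - i).toNat, by omega⟩
    refine ⟨n, fun hc => hi ?_, rfl⟩
    rw [← ZeroMemClass.coe_eq_zero, coe_decompose_dehom_sub_of_mem_mixed hF, hc]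
  · rintro ⟨n, hn, rfl⟩ h
    exact hn (by rw [← coe_decompose_dehom_sub_of_mem_mixed hF, h, ZeroMemClass.coe_zero])

lemma deg_dehom_of_mem_mixed (hF0 : F ≠ 0) : deg A (dehom F) = p - F.natTrailingDegree := by
  suffices hmax : (decompose A (dehom F)).support.max = ((p - F.natTrailingDegree : ℤ) : WithBot ℤ)
    by rw [deg, hmax]; rfl
  rw [support_decompose_dehom_of_mem_mixed hF]
  refine le_antisymm (Finset.max_le ?_) (Finset.le_max ?_)
  · simp only [Finset.mem_image, forall_exists_index, and_imp]
    rintro _ n hn rfl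
    have := natTrailingDegree_le_of_mem_supp n hn
    exact_mod_cast (by omega : p - (n : ℤ) ≤ p - F.natTrailingDegree)
  · exact Finset.mem_image_of_mem _ (natTrailingDegree_mem_support_of_nonzero hF0)

theorem eq_X_pow_mul_homog_dehom_of_mem_mixed :
    F = X ^ F.natTrailingDegree * homog A (dehom F) := by
  by_cases hF0 : F = 0
  · simp [hF0, homog]
  set r := F.natTrailingDegree
  rw [homog, deg_dehom_of_mem_mixed hF hF0, support_decompose_dehom_of_mem_mixed hF,
    Finset.sum_image (fun _ _ _ _ h => by simpa using h), Finset.mul_sum]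
  conv_lhs => rw [as_sum_support F]
  refine Finset.sum_congr rfl fun n hn => ?_
  have hrn : r ≤ n := natTrailingDegree_le_of_mem_supp n hn
  have hexp : (p - r - (p - n)).toNat = n - r := by omega
  rw [coe_decompose_dehom_sub_of_mem_mixed hF, hexp, ← mul_assoc, X_pow_mul, mul_assoc, ← pow_add,
    Nat.add_sub_cancel' hrn, C_mul_X_pow_eq_monomial]

end Homogeneous

end Graded

/-- Every homogeneous element `F` of the homogenization ideal `⟨I*⟩` is of
the form `t^r f*` for some `r ∈ ℕ` and `f ∈ I`. -/
theorem stmt6 (A : ℤ → AddSubgroup R) [GradedRing A] (I : TwoSidedIdeal R)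
    (F : Polynomial R) (p : ℤ) (hF : F ∈ mixed A p)
    (hFI : F ∈ TwoSidedIdeal.span (homog A '' (I : Set R))) :
    ∃ (r : ℕ) (f : R), f ∈ I ∧ F = Polynomial.X ^ r * homog A f :=
  ⟨F.natTrailingDegree, dehom F, dehom_mem_of_mem_span_homog A hFI,
    eq_X_pow_mul_homog_dehom_of_mem_mixed hF⟩
end

section
/- Let R = K⟨X⟩ be a free algebra over a field K with a graded monomial ordering ≽_{gr}, I a two-sided ideal, and 𝓖 ⊆ I. Then 𝓖 is a Gröbner basis of I if and only if LH(𝓖) is a Gröbner basis of the graded ideal ⟨LH(I)⟩. -/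
open Polynomial
open scoped Classical

variable {X K : Type*} [Field K] [LinearOrder (FreeMonoid X)]

/-- The leading monomial (as a word) of an element of the free algebra
`K⟨X⟩ = MonoidAlgebra K (FreeMonoid X)`, with junk value the empty word for `0`. -/
noncomputable def lm (f : MonoidAlgebra K (FreeMonoid X)) : FreeMonoid X :=
  WithBot.unbotD 1 f.coeff.support.max

/-- The set of leading monomials (viewed as elements of the free algebra) of the
nonzero elements of `S`. -/
noncomputable def LMset (S : Set (MonoidAlgebra K (FreeMonoid X))) :
    Set (MonoidAlgebra K (FreeMonoid X)) :=
  (fun f => MonoidAlgebra.single (lm f) (1 : K)) '' (S \ {0})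

/-- The degree (top word length) of an element of the free algebra. -/
noncomputable def dW (f : MonoidAlgebra K (FreeMonoid X)) : ℕ :=
  f.coeff.support.sup (fun w => w.length)

/-- The leading homogeneous part of an element of the free algebra. -/
noncomputable def LHm (f : MonoidAlgebra K (FreeMonoid X)) : MonoidAlgebra K (FreeMonoid X) :=
  MonoidAlgebra.ofCoeff (Finsupp.filter (fun w => w.length = dW f) f.coeff)

/-- The set of leading homogeneous parts of the nonzero elements of `S`. -/
noncomputable def LHset (S : Set (MonoidAlgebra K (FreeMonoid X))) :
    Set (MonoidAlgebra K (FreeMonoid X)) :=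
  LHm '' (S \ {0})

/-- A graded (length-compatible) ordering: words of smaller length are smaller. -/
def GradedOrder (X : Type*) [LinearOrder (FreeMonoid X)] : Prop :=
  ∀ u v : FreeMonoid X, u.length < v.length → u < v

/-- A monomial ordering: compatible with multiplication on both sides. -/
def MonomialOrder' (X : Type*) [LinearOrder (FreeMonoid X)] : Prop :=
  ∀ u v w : FreeMonoid X, u < v → w * u < w * v ∧ u * w < v * w

/-!
Under a graded order the leading monomial of `f` lies in its leading homogeneous part, so
`lm (LH f) = lm f`; hence `LM(LH(𝒢)) = LM(𝒢)`, and it suffices to show `LM(⟨LH(I)⟩) = LM(I)`.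
Since `K⟨X⟩` is a domain, `LH` is multiplicative, so `LH(I)` is stable under multiplication by
monomials and `⟨LH(I)⟩` is just the additive group generated by `LH(I)`. The degree-`n` component
of such a sum is the degree-`n` component of an element of `I` of degree at most `n`; taking `n`
to be the degree of a nonzero `F ∈ ⟨LH(I)⟩` gives `LH(F) = LH(f)` for a nonzero `f ∈ I`, whence
`lm F = lm f`.
-/

namespace MonoidAlgebra

theorem mem_addSubgroup_closure_of_mem_span {k G : Type*} [Ring k] [Monoid G]
    {S : Set (MonoidAlgebra k G)}
    (hl : ∀ g c, ∀ s ∈ S, single g c * s ∈ AddSubgroup.closure S)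
    (hr : ∀ g c, ∀ s ∈ S, s * single g c ∈ AddSubgroup.closure S)
    {z : MonoidAlgebra k G} (hz : z ∈ TwoSidedIdeal.span S) : z ∈ AddSubgroup.closure S := by
  have mul_left (r : MonoidAlgebra k G) {y} (hy : y ∈ AddSubgroup.closure S) :
      r * y ∈ AddSubgroup.closure S := by
    induction r using induction_linear with
    | zero => simp
    | add a b ha hb => rw [add_mul]; exact AddSubgroup.add_mem _ ha hb
    | single g c =>
      have := (AddMonoidHom.mulLeft (single g c)).map_closure S ▸ AddSubgroup.mem_map_of_mem _ hy
      exact (AddSubgroup.closure_le _).mpr (by rintro - ⟨s, hs, rfl⟩; exact hl g c s hs) this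
  have mul_right (r : MonoidAlgebra k G) {y} (hy : y ∈ AddSubgroup.closure S) :
      y * r ∈ AddSubgroup.closure S := by
    induction r using induction_linear with
    | zero => simp
    | add a b ha hb => rw [mul_add]; exact AddSubgroup.add_mem _ ha hb
    | single g c =>
      have := (AddMonoidHom.mulRight (single g c)).map_closure S ▸ AddSubgroup.mem_map_of_mem _ hy
      exact (AddSubgroup.closure_le _).mpr (by rintro - ⟨s, hs, rfl⟩; exact hr g c s hs) this
  let T : TwoSidedIdeal (MonoidAlgebra k G) := .mk' (AddSubgroup.closure S)
    (AddSubgroup.zero_mem _) (AddSubgroup.add_mem _) (AddSubgroup.neg_mem _)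
    (mul_left _) (mul_right _)
  have hST : TwoSidedIdeal.span S ≤ T :=
    TwoSidedIdeal.span_le.mpr fun s hs =>
      (TwoSidedIdeal.mem_mk' ..).mpr (AddSubgroup.subset_closure hs)
  exact (TwoSidedIdeal.mem_mk' ..).mp (hST hz)

end MonoidAlgebra

namespace FreeMonoid

variable {R σ : Type*} [Semiring R]

noncomputable def homogPart (n : ℕ) :
    MonoidAlgebra R (FreeMonoid σ) →+ MonoidAlgebra R (FreeMonoid σ) :=
  MonoidAlgebra.coeffAddEquiv.symm.toAddMonoidHom.comp <|
    (Finsupp.filterAddHom fun w => w.length = n).comp MonoidAlgebra.coeffAddEquiv.toAddMonoidHom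

theorem homogPart_apply (n : ℕ) (f : MonoidAlgebra R (FreeMonoid σ)) :
    homogPart n f = MonoidAlgebra.ofCoeff (f.coeff.filter fun w => w.length = n) :=
  rfl

theorem coeff_homogPart (n : ℕ) (f : MonoidAlgebra R (FreeMonoid σ)) (w : FreeMonoid σ) :
    (homogPart n f).coeff w = if w.length = n then f.coeff w else 0 :=
  Finsupp.filter_apply _ _ _

def IsHomogeneous (n : ℕ) (f : MonoidAlgebra R (FreeMonoid σ)) : Prop :=
  ∀ w ∈ f.coeff.support, w.length = n

theorem mem_support_homogPart {n : ℕ} {f : MonoidAlgebra R (FreeMonoid σ)} {w : FreeMonoid σ} :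
    w ∈ (homogPart n f).coeff.support ↔ w ∈ f.coeff.support ∧ w.length = n := by
  rw [homogPart_apply, MonoidAlgebra.coeff_ofCoeff, Finsupp.support_filter, Finset.mem_filter]

theorem homogPart_eq_zero {n : ℕ} {f : MonoidAlgebra R (FreeMonoid σ)}
    (h : ∀ w ∈ f.coeff.support, w.length ≠ n) : homogPart n f = 0 := by
  rw [homogPart_apply, MonoidAlgebra.ofCoeff_eq_zero, Finsupp.filter_eq_zero_iff]
  exact fun w hw => by_contra fun hw0 => h w (Finsupp.mem_support_iff.mpr hw0) hw

theorem IsHomogeneous.homogPart_self {n : ℕ} {f : MonoidAlgebra R (FreeMonoid σ)}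
    (hf : IsHomogeneous n f) : homogPart n f = f := by
  rw [homogPart_apply, (Finsupp.filter_eq_self_iff _ _).mpr fun w hw =>
    hf w (Finsupp.mem_support_iff.mpr hw)]

theorem isHomogeneous_homogPart (n : ℕ) (f : MonoidAlgebra R (FreeMonoid σ)) :
    IsHomogeneous n (homogPart n f) :=
  fun _ hw => (mem_support_homogPart.mp hw).2

theorem isHomogeneous_single (w : FreeMonoid σ) (c : R) :
    IsHomogeneous w.length (MonoidAlgebra.single w c) := by
  intro v hv
  rw [Finset.mem_singleton.mp (Finsupp.support_single_subset hv)]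

theorem exists_length_eq_add_of_mem_support_mul {f g : MonoidAlgebra R (FreeMonoid σ)}
    {w : FreeMonoid σ} (hw : w ∈ (f * g).coeff.support) :
    ∃ u ∈ f.coeff.support, ∃ v ∈ g.coeff.support, w.length = u.length + v.length := by
  obtain ⟨u, hu, v, hv, rfl⟩ := Finset.mem_mul.mp (MonoidAlgebra.support_coeff_mul_subset _ _ hw)
  exact ⟨u, hu, v, hv, FreeMonoid.length_mul u v⟩

theorem IsHomogeneous.mul {m n : ℕ} {f g : MonoidAlgebra R (FreeMonoid σ)}
    (hf : IsHomogeneous m f) (hg : IsHomogeneous n g) : IsHomogeneous (m + n) (f * g) := by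
  intro w hw
  obtain ⟨u, hu, v, hv, hlen⟩ := exists_length_eq_add_of_mem_support_mul hw
  rw [hlen, hf u hu, hg v hv]

end FreeMonoid

open FreeMonoid

section LeadingHomogeneousPart

variable {k σ : Type*} [Field k]

theorem LHm_eq_homogPart (f : MonoidAlgebra k (FreeMonoid σ)) : LHm f = homogPart (dW f) f :=
  rfl

theorem length_le_dW {f : MonoidAlgebra k (FreeMonoid σ)} {w : FreeMonoid σ}
    (hw : w ∈ f.coeff.support) : w.length ≤ dW f :=
  Finset.le_sup hw

theorem dW_add_le {f g : MonoidAlgebra k (FreeMonoid σ)} {n : ℕ} (hf : dW f ≤ n) (hg : dW g ≤ n) :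
    dW (f + g) ≤ n := by
  refine Finset.sup_le fun w hw => ?_
  rcases Finset.mem_union.mp (Finsupp.support_add hw) with hw | hw
  exacts [(length_le_dW hw).trans hf, (length_le_dW hw).trans hg]

theorem dW_neg (f : MonoidAlgebra k (FreeMonoid σ)) : dW (-f) = dW f := by
  rw [dW, dW, MonoidAlgebra.coeff_neg, Finsupp.support_neg]

theorem dW_le_of_homogPart_ne_zero {f : MonoidAlgebra k (FreeMonoid σ)} {n : ℕ}
    (h : homogPart n f ≠ 0) : n ≤ dW f := by
  by_contra! hlt
  exact h (homogPart_eq_zero fun w hw => ((length_le_dW hw).trans_lt hlt).ne)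

theorem isHomogeneous_LHm (f : MonoidAlgebra k (FreeMonoid σ)) : IsHomogeneous (dW f) (LHm f) :=
  isHomogeneous_homogPart _ _

theorem LHm_zero : LHm (0 : MonoidAlgebra k (FreeMonoid σ)) = 0 :=
  map_zero (homogPart _)

theorem LHm_ne_zero {f : MonoidAlgebra k (FreeMonoid σ)} (hf : f ≠ 0) : LHm f ≠ 0 := by
  obtain ⟨w, hw, hlen⟩ := Finset.exists_mem_eq_sup _
    (Finsupp.support_nonempty_iff.mpr (mt MonoidAlgebra.coeff_eq_zero.mp hf)) FreeMonoid.length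
  have : w ∈ (LHm f).coeff.support := mem_support_homogPart.mpr ⟨hw, hlen.symm⟩
  rintro h
  simp [h] at this

theorem length_lt_dW_of_mem_support_sub_LHm {f : MonoidAlgebra k (FreeMonoid σ)} {w : FreeMonoid σ}
    (hw : w ∈ (f - LHm f).coeff.support) : w.length < dW f := by
  rw [Finsupp.mem_support_iff, MonoidAlgebra.coeff_sub, Finsupp.sub_apply, LHm_eq_homogPart,
    coeff_homogPart] at hw
  split_ifs at hw with hlen
  · exact absurd (sub_self _) hw
  · exact (length_le_dW (Finsupp.mem_support_iff.mpr (by simpa using hw))).lt_of_ne hlen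

theorem LHm_add_of_isHomogeneous {x y : MonoidAlgebra k (FreeMonoid σ)} {n : ℕ} (hx : x ≠ 0)
    (hxn : IsHomogeneous n x) (hy : ∀ w ∈ y.coeff.support, w.length < n) : LHm (x + y) = x := by
  have hdW : dW (x + y) = n := by
    refine le_antisymm (Finset.sup_le fun w hw => ?_) (dW_le_of_homogPart_ne_zero ?_)
    · rcases Finset.mem_union.mp (Finsupp.support_add hw) with hw | hw
      exacts [(hxn w hw).le, (hy w hw).le]
    · rwa [map_add, hxn.homogPart_self, homogPart_eq_zero fun w hw => (hy w hw).ne, add_zero]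
  rw [LHm_eq_homogPart, hdW, map_add, hxn.homogPart_self,
    homogPart_eq_zero fun w hw => (hy w hw).ne, add_zero]

theorem FreeMonoid.IsHomogeneous.LHm_eq_self {x : MonoidAlgebra k (FreeMonoid σ)} {n : ℕ}
    (hx : IsHomogeneous n x) : LHm x = x := by
  rcases eq_or_ne x 0 with rfl | hx0
  · exact LHm_zero
  · simpa using LHm_add_of_isHomogeneous hx0 hx (y := 0) (by simp)

theorem LHm_mul (f g : MonoidAlgebra k (FreeMonoid σ)) : LHm (f * g) = LHm f * LHm g := by
  rcases eq_or_ne f 0 with rfl | hf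
  · simp [LHm_zero]
  rcases eq_or_ne g 0 with rfl | hg
  · simp [LHm_zero]
  have hlower : ∀ w ∈ (LHm f * (g - LHm g) + (f - LHm f) * g).coeff.support,
      w.length < dW f + dW g := by
    intro w hw
    rcases Finset.mem_union.mp (Finsupp.support_add hw) with hw | hw
    · obtain ⟨u, hu, v, hv, hlen⟩ := exists_length_eq_add_of_mem_support_mul hw
      rw [hlen, isHomogeneous_LHm f u hu]
      exact Nat.add_lt_add_left (length_lt_dW_of_mem_support_sub_LHm hv) _
    · obtain ⟨u, hu, v, hv, hlen⟩ := exists_length_eq_add_of_mem_support_mul hw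
      rw [hlen]
      exact Nat.add_lt_add_of_lt_of_le (length_lt_dW_of_mem_support_sub_LHm hu) (length_le_dW hv)
  have hsplit : f * g = LHm f * LHm g + (LHm f * (g - LHm g) + (f - LHm f) * g) := by
    noncomm_ring
  rw [hsplit, LHm_add_of_isHomogeneous (mul_ne_zero (LHm_ne_zero hf) (LHm_ne_zero hg))
    ((isHomogeneous_LHm f).mul (isHomogeneous_LHm g)) hlower]

end LeadingHomogeneousPart

section LeadingMonomial

variable {k σ : Type*} [Field k] [LinearOrder (FreeMonoid σ)]

theorem lm_eq_max' {f : MonoidAlgebra k (FreeMonoid σ)} (hf : f.coeff.support.Nonempty) :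
    lm f = f.coeff.support.max' hf := by
  rw [lm, ← Finset.coe_max' hf]
  rfl

theorem lm_mem_support {f : MonoidAlgebra k (FreeMonoid σ)} (hf : f ≠ 0) :
    lm f ∈ f.coeff.support := by
  have hne := Finsupp.support_nonempty_iff.mpr (mt MonoidAlgebra.coeff_eq_zero.mp hf)
  rw [lm_eq_max' hne]
  exact Finset.max'_mem _ hne

theorem le_lm {f : MonoidAlgebra k (FreeMonoid σ)} {w : FreeMonoid σ} (hw : w ∈ f.coeff.support) :
    w ≤ lm f := by
  rw [lm_eq_max' ⟨w, hw⟩]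
  exact Finset.le_max' _ _ hw

theorem length_lm (hgr : GradedOrder σ) {f : MonoidAlgebra k (FreeMonoid σ)} (hf : f ≠ 0) :
    (lm f).length = dW f :=
  (length_le_dW (lm_mem_support hf)).antisymm <|
    Finset.sup_le fun _ hw => not_lt.mp fun hlt => (le_lm hw).not_gt (hgr _ _ hlt)

theorem lm_LHm (hgr : GradedOrder σ) {f : MonoidAlgebra k (FreeMonoid σ)} (hf : f ≠ 0) :
    lm (LHm f) = lm f :=
  (le_lm (mem_support_homogPart.mp (lm_mem_support (LHm_ne_zero hf))).1).antisymm <|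
    le_lm (mem_support_homogPart.mpr ⟨lm_mem_support hf, length_lm hgr hf⟩)

theorem LMset_subset_LMset {S T : Set (MonoidAlgebra k (FreeMonoid σ))}
    (h : ∀ s ∈ S, s ≠ 0 → ∃ t ∈ T, t ≠ 0 ∧ lm t = lm s) : LMset S ⊆ LMset T := by
  rintro - ⟨s, ⟨hs, hs0⟩, rfl⟩
  obtain ⟨t, ht, ht0, hlm⟩ := h s hs hs0
  exact ⟨t, ⟨ht, ht0⟩, congrArg (MonoidAlgebra.single · 1) hlm⟩

theorem LMset_LHset (hgr : GradedOrder σ) (S : Set (MonoidAlgebra k (FreeMonoid σ))) :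
    LMset (LHset S) = LMset S := by
  refine (LMset_subset_LMset ?_).antisymm (LMset_subset_LMset ?_)
  · rintro - ⟨s, ⟨hs, hs0⟩, rfl⟩ -
    exact ⟨s, hs, hs0, (lm_LHm hgr hs0).symm⟩
  · intro s hs hs0
    exact ⟨LHm s, ⟨s, ⟨hs, hs0⟩, rfl⟩, LHm_ne_zero hs0, lm_LHm hgr hs0⟩

end LeadingMonomial

section IdealOfLeadingHomogeneousParts

variable {k σ : Type*} [Field k] (I : TwoSidedIdeal (MonoidAlgebra k (FreeMonoid σ)))

theorem LHm_mul_mem_LHset {a s : MonoidAlgebra k (FreeMonoid σ)} (ha : a ≠ 0)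
    (hs : s ∈ LHset (I : Set (MonoidAlgebra k (FreeMonoid σ)))) :
    LHm a * s ∈ LHset (I : Set (MonoidAlgebra k (FreeMonoid σ))) := by
  obtain ⟨f, ⟨hf, hf0⟩, rfl⟩ := hs
  exact ⟨a * f, ⟨I.mul_mem_left _ _ hf, mul_ne_zero ha hf0⟩, LHm_mul a f⟩

theorem mul_LHm_mem_LHset {a s : MonoidAlgebra k (FreeMonoid σ)} (ha : a ≠ 0)
    (hs : s ∈ LHset (I : Set (MonoidAlgebra k (FreeMonoid σ)))) :
    s * LHm a ∈ LHset (I : Set (MonoidAlgebra k (FreeMonoid σ))) := by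
  obtain ⟨f, ⟨hf, hf0⟩, rfl⟩ := hs
  exact ⟨f * a, ⟨I.mul_mem_right _ _ hf, mul_ne_zero hf0 ha⟩, LHm_mul f a⟩

theorem mem_addSubgroup_closure_LHset_of_mem_span {x : MonoidAlgebra k (FreeMonoid σ)}
    (hx : x ∈ TwoSidedIdeal.span (LHset (I : Set (MonoidAlgebra k (FreeMonoid σ))))) :
    x ∈ AddSubgroup.closure (LHset (I : Set (MonoidAlgebra k (FreeMonoid σ)))) := by
  refine MonoidAlgebra.mem_addSubgroup_closure_of_mem_span ?_ ?_ hx <;>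
    intro w c s hs <;> rcases eq_or_ne c 0 with rfl | hc
  · simp
  · rw [← (isHomogeneous_single w c).LHm_eq_self]
    exact AddSubgroup.subset_closure (LHm_mul_mem_LHset I (MonoidAlgebra.single_ne_zero.mpr hc) hs)
  · simp
  · rw [← (isHomogeneous_single w c).LHm_eq_self]
    exact AddSubgroup.subset_closure (mul_LHm_mem_LHset I (MonoidAlgebra.single_ne_zero.mpr hc) hs)

theorem exists_homogPart_eq_of_mem_addSubgroup_closure_LHset {x : MonoidAlgebra k (FreeMonoid σ)}
    (hx : x ∈ AddSubgroup.closure (LHset (I : Set (MonoidAlgebra k (FreeMonoid σ))))) (n : ℕ) :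
    ∃ f ∈ I, dW f ≤ n ∧ homogPart n x = homogPart n f := by
  induction hx using AddSubgroup.closure_induction with
  | mem _ hs =>
    obtain ⟨g, ⟨hg, -⟩, rfl⟩ := hs
    rcases eq_or_ne n (dW g) with rfl | hn
    · exact ⟨g, hg, le_rfl, (isHomogeneous_LHm g).homogPart_self⟩
    · refine ⟨0, I.zero_mem, Nat.zero_le _, ?_⟩
      rw [map_zero, homogPart_eq_zero fun w hw => (isHomogeneous_LHm g w hw).trans_ne (Ne.symm hn)]
  | zero => exact ⟨0, I.zero_mem, Nat.zero_le _, rfl⟩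
  | add _ _ _ _ hx hy =>
    obtain ⟨f, hf, hfn, hxf⟩ := hx
    obtain ⟨g, hg, hgn, hyg⟩ := hy
    exact ⟨f + g, I.add_mem hf hg, dW_add_le hfn hgn, by rw [map_add, map_add, hxf, hyg]⟩
  | neg _ _ hx =>
    obtain ⟨f, hf, hfn, hxf⟩ := hx
    exact ⟨-f, I.neg_mem hf, (dW_neg f).trans_le hfn, by rw [map_neg, map_neg, hxf]⟩

theorem exists_lm_eq_of_mem_span_LHset [LinearOrder (FreeMonoid σ)] (hgr : GradedOrder σ)
    {F : MonoidAlgebra k (FreeMonoid σ)}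
    (hF : F ∈ TwoSidedIdeal.span (LHset (I : Set (MonoidAlgebra k (FreeMonoid σ))))) (hF0 : F ≠ 0) :
    ∃ f ∈ I, f ≠ 0 ∧ lm f = lm F := by
  obtain ⟨f, hf, hfF, hLH⟩ := exists_homogPart_eq_of_mem_addSubgroup_closure_LHset I
    (mem_addSubgroup_closure_LHset_of_mem_span I hF) (dW F)
  rw [← LHm_eq_homogPart] at hLH
  have hdW : dW f = dW F := hfF.antisymm (dW_le_of_homogPart_ne_zero (hLH ▸ LHm_ne_zero hF0))
  rw [← hdW, ← LHm_eq_homogPart] at hLH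
  have hf0 : f ≠ 0 := by
    rintro rfl
    exact LHm_ne_zero hF0 (hLH.trans LHm_zero)
  exact ⟨f, hf, hf0, by rw [← lm_LHm hgr hf0, ← hLH, lm_LHm hgr hF0]⟩

theorem LMset_span_LHset [LinearOrder (FreeMonoid σ)] (hgr : GradedOrder σ) :
    LMset ((TwoSidedIdeal.span (LHset (I : Set (MonoidAlgebra k (FreeMonoid σ)))) :
        TwoSidedIdeal (MonoidAlgebra k (FreeMonoid σ))) : Set _) =
      LMset (I : Set (MonoidAlgebra k (FreeMonoid σ))) := by
  refine (LMset_subset_LMset fun F hF hF0 => ?_).antisymm (LMset_subset_LMset fun f hf hf0 => ?_)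
  · exact exists_lm_eq_of_mem_span_LHset I hgr hF hF0
  · exact ⟨LHm f, TwoSidedIdeal.subset_span ⟨f, ⟨hf, hf0⟩, rfl⟩, LHm_ne_zero hf0, lm_LHm hgr hf0⟩

end IdealOfLeadingHomogeneousParts

theorem stmt16_general (hgr : GradedOrder X)
    (I : TwoSidedIdeal (MonoidAlgebra K (FreeMonoid X)))
    (G : Set (MonoidAlgebra K (FreeMonoid X))) :
    TwoSidedIdeal.span (LMset (I : Set (MonoidAlgebra K (FreeMonoid X)))) =
        TwoSidedIdeal.span (LMset G) ↔
      TwoSidedIdeal.span (LMset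
          ((TwoSidedIdeal.span (LHset (I : Set (MonoidAlgebra K (FreeMonoid X)))) :
            TwoSidedIdeal (MonoidAlgebra K (FreeMonoid X))) : Set _)) =
        TwoSidedIdeal.span (LMset (LHset G)) := by
  rw [LMset_span_LHset I hgr, LMset_LHset hgr G]

/-- `𝒢 ⊆ I` is a Gröbner basis of `I` iff `LH(𝒢)` is a Gröbner basis of
the graded ideal `⟨LH(I)⟩`. -/
theorem stmt16 (hgr : GradedOrder X) (hmo : MonomialOrder' X)
    (hwf : WellFoundedLT (FreeMonoid X))
    (I : TwoSidedIdeal (MonoidAlgebra K (FreeMonoid X)))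
    (G : Set (MonoidAlgebra K (FreeMonoid X))) (hGI : G ⊆ (I : Set _)) :
    TwoSidedIdeal.span (LMset (I : Set (MonoidAlgebra K (FreeMonoid X)))) =
        TwoSidedIdeal.span (LMset G) ↔
      TwoSidedIdeal.span (LMset
          ((TwoSidedIdeal.span (LHset (I : Set (MonoidAlgebra K (FreeMonoid X)))) :
            TwoSidedIdeal (MonoidAlgebra K (FreeMonoid X))) : Set _)) =
        TwoSidedIdeal.span (LMset (LHset G)) :=
  stmt16_general hgr I G
end
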